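/- arXiv:2106.14399 — 2 statements merged into one kernel-verified Lean document; each statement's English description precedes it below -/
import Mathlib

section
/- The split sample composite likelihood ratio statistic U¹(θ₀;X_n) = L(θ̂²;X_n¹)/L(θ₀;X_n¹), where θ̂² depends only on the second subsample, has expectation at most 1 under the true parameter θ₀. -/
open MeasureTheory ENNReal BigOperators Finset

noncomputable section

/-- Lebesgue measure on `ℝ^d`. -/
def lebd (d : ℕ) : Measure (Fin d → ℝ) := Measure.pi fun _ => volume

/-- The marginal density, for the coordinates in `S`, of a joint density `p` on `ℝ^d`:
the coordinates outside `S` are integrated out. -/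
def marg {d : ℕ} (p : (Fin d → ℝ) → ℝ≥0∞) (S : Finset (Fin d)) (x : Fin d → ℝ) : ℝ≥0∞ :=
  ∫⁻ y : {j : Fin d // j ∉ S} → ℝ,
    p (fun j => if h : j ∈ S then x j else y ⟨j, h⟩) ∂(Measure.pi fun _ => volume)

/-- The individual composite likelihood (ICL): a weighted geometric mean (weights `σ_S/υ`,
`τ_{T}/υ`) of the marginal densities `p(x_S)` over nonempty `S ⊆ [d]` and the conditional
densities `p(x_{T⃖} | x_{T⃗}) = p(x_{T⃖ ∪ T⃗}) / p(x_{T⃗})` over ordered divisions of `[d]`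
into disjoint nonempty subsets. -/
def icl {d : ℕ} (p : (Fin d → ℝ) → ℝ≥0∞)
    (σ : Finset (Fin d) → ℝ) (τ : Finset (Fin d) → Finset (Fin d) → ℝ) (υ : ℝ)
    (x : Fin d → ℝ) : ℝ≥0∞ :=
  (∏ S ∈ univ.filter (fun S : Finset (Fin d) => S.Nonempty), marg p S x ^ (σ S / υ)) *
  (∏ T ∈ (univ ×ˢ univ).filter
      (fun T : Finset (Fin d) × Finset (Fin d) =>
        T.1.Nonempty ∧ T.2.Nonempty ∧ Disjoint T.1 T.2),
    (marg p (T.1 ∪ T.2) x / marg p T.2 x) ^ (τ T.1 T.2 / υ))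

/-- The composite likelihood of an i.i.d. subsample `xs`. -/
def clik {d n : ℕ} (p : (Fin d → ℝ) → ℝ≥0∞)
    (σ : Finset (Fin d) → ℝ) (τ : Finset (Fin d) → Finset (Fin d) → ℝ) (υ : ℝ)
    (xs : Fin n → Fin d → ℝ) : ℝ≥0∞ :=
  ∏ i, icl p σ τ υ (xs i)

/-- Law of the full split sample `(X_n¹, X_n²)` of i.i.d. observations with density `p θ₀`:
the product Lebesgue measure reweighted by the joint density. -/
def sampleLaw {d : ℕ} (n₁ n₂ : ℕ) (p₀ : (Fin d → ℝ) → ℝ≥0∞) :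
    Measure ((Fin n₁ → Fin d → ℝ) × (Fin n₂ → Fin d → ℝ)) :=
  ((Measure.pi fun _ : Fin n₁ => lebd d).prod
      (Measure.pi fun _ : Fin n₂ => lebd d)).withDensity
    (fun z => (∏ i, p₀ (z.1 i)) * ∏ i, p₀ (z.2 i))

section AuxENNReal

lemma CLR.prod_inv {ι : Type*} (s : Finset ι) (f : ι → ℝ≥0∞) (h0 : ∀ j ∈ s, f j ≠ 0) :
    (∏ j ∈ s, f j)⁻¹ = ∏ j ∈ s, (f j)⁻¹ := by
  classical
  revert h0
  refine Finset.induction_on s (by simp) ?_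
  intro j s hj ih h0
  rw [Finset.prod_insert hj, Finset.prod_insert hj,
    ENNReal.mul_inv (Or.inl (h0 j (Finset.mem_insert_self _ _)))
      (Or.inr (Finset.prod_ne_zero_iff.mpr fun i hi => h0 i (Finset.mem_insert_of_mem hi))),
    ih fun i hi => h0 i (Finset.mem_insert_of_mem hi)]

lemma CLR.prod_div {ι : Type*} (s : Finset ι) (a b : ι → ℝ≥0∞)
    (hb : ∀ j ∈ s, b j ≠ 0) :
    (∏ j ∈ s, a j) / (∏ j ∈ s, b j) = ∏ j ∈ s, (a j / b j) := by
  simp only [div_eq_mul_inv]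
  rw [CLR.prod_inv s b hb, ← Finset.prod_mul_distrib]

lemma CLR.prod_rpow_div {ι : Type*} (s : Finset ι) (a b : ι → ℝ≥0∞) (w : ι → ℝ)
    (hw : ∀ j ∈ s, 0 ≤ w j) (hb : ∀ j ∈ s, b j ≠ 0) :
    (∏ j ∈ s, a j ^ w j) / (∏ j ∈ s, b j ^ w j) = ∏ j ∈ s, (a j / b j) ^ w j := by
  rw [CLR.prod_div s _ _ (fun j hj => by
    simp only [ne_eq, ENNReal.rpow_eq_zero_iff, not_or]
    constructor
    · rintro ⟨h, -⟩; exact hb j hj h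
    · rintro ⟨-, h⟩; linarith [hw j hj])]
  exact Finset.prod_congr rfl fun j hj =>
    (ENNReal.div_rpow_of_nonneg _ _ (hw j hj)).symm

lemma CLR.div4 (a b c e : ℝ≥0∞) (hb : b ≠ 0) (hc0 : c ≠ 0) (hct : c ≠ ∞)
    (het : e ≠ ∞) :
    (a / b) / (c / e) = (a * e) / (b * c) := by
  rw [div_eq_mul_inv, div_eq_mul_inv, div_eq_mul_inv, div_eq_mul_inv,
    ENNReal.mul_inv (Or.inl hc0) (Or.inl hct), inv_inv,
    ENNReal.mul_inv (Or.inl hb) (Or.inr hc0)]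
  ring

lemma CLR.div_mul_le (a b : ℝ≥0∞) : a / b * b ≤ a := by
  rw [div_eq_mul_inv, mul_assoc]
  calc a * (b⁻¹ * b) ≤ a * 1 := mul_le_mul_right (ENNReal.inv_mul_le_one b) a
  _ = a := mul_one a

lemma CLR.div_mul_mul_le (A c B : ℝ≥0∞) (hc : c ≠ 0) (hB : B ≠ 0) :
    A / (c * B) * B ≤ A / c := by
  rw [div_eq_mul_inv, ENNReal.mul_inv (Or.inl hc) (Or.inr hB)]
  have h : A * (c⁻¹ * B⁻¹) * B = A * c⁻¹ * (B⁻¹ * B) := by ring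
  rw [h]
  calc A * c⁻¹ * (B⁻¹ * B) ≤ A * c⁻¹ * 1 := mul_le_mul_right (ENNReal.inv_mul_le_one B) _
  _ = A / c := by rw [mul_one, div_eq_mul_inv]

end AuxENNReal

section AuxMarginal

open Function

lemma CLR.lmarginal_pull {δ : Type*} [DecidableEq δ] {π : δ → Type*}
    [∀ i, MeasurableSpace (π i)] (μ : ∀ i, Measure (π i)) (s : Finset δ)
    (g h : (∀ i, π i) → ℝ≥0∞) (hh : Measurable h)
    (hg : ∀ x y, g (updateFinset x s y) = g x) :
    (∫⋯∫⁻_s, (fun x => g x * h x) ∂μ) = fun x => g x * (∫⋯∫⁻_s, h ∂μ) x := by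
  funext x
  simp only [lmarginal, hg]
  exact lintegral_const_mul _ (hh.comp measurable_updateFinset)

lemma CLR.lintegral_pi_prod {ι : Type*} [Fintype ι] [DecidableEq ι] {α : Type*}
    [MeasurableSpace α] [Nonempty α] (μ : Measure α) [SigmaFinite μ]
    (g : ι → α → ℝ≥0∞) (hg : ∀ i, Measurable (g i)) :
    ∫⁻ z, ∏ i, g i (z i) ∂(Measure.pi fun _ : ι => μ) = ∏ i, ∫⁻ x, g i x ∂μ := by
  obtain ⟨a₀⟩ := ‹Nonempty α›
  have hFs : ∀ s : Finset ι, Measurable fun z : ι → α => ∏ i ∈ s, g i (z i) :=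
    fun s => Finset.measurable_prod s fun i _ => (hg i).comp (measurable_pi_apply i)
  have key : ∀ s : Finset ι, ∀ z : ι → α,
      (∫⋯∫⁻_s, (fun z => ∏ i ∈ s, g i (z i)) ∂(fun _ => μ)) z
        = ∏ i ∈ s, ∫⁻ x, g i x ∂μ := by
    intro s
    refine Finset.induction_on s (by simp) ?_
    intro j s hj ih z
    have hF : (fun z : ι → α => ∏ i ∈ insert j s, g i (z i))
        = fun z => (fun z : ι → α => g j (z j)) z * (fun z => ∏ i ∈ s, g i (z i)) z := by
      funext z; rw [Finset.prod_insert hj]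
    have hm : Measurable (fun z : ι → α => (fun z : ι → α => g j (z j)) z *
        (fun z => ∏ i ∈ s, g i (z i)) z) :=
      Measurable.mul ((hg j).comp (measurable_pi_apply j)) (hFs s)
    rw [hF, lmarginal_insert _ hm hj]
    have hdep : ∀ (x : ι → α) (y : (i : s) → α),
        (fun z : ι → α => g j (z j)) (updateFinset x s y) = g j (x j) := by
      intro x y
      simp [updateFinset, hj]
    rw [show (∫⋯∫⁻_s, (fun z => (fun z : ι → α => g j (z j)) z *
          (fun z => ∏ i ∈ s, g i (z i)) z) ∂(fun _ => μ))
        = fun x => g j (x j) * (∫⋯∫⁻_s, (fun z => ∏ i ∈ s, g i (z i)) ∂(fun _ => μ)) x from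
      CLR.lmarginal_pull _ s _ _ (hFs s) hdep]
    simp only [ih, Function.update_self]
    rw [lintegral_mul_const _ (hg j), Finset.prod_insert hj]
  rw [lintegral_eq_lmarginal_univ (fun _ => a₀), key univ]

end AuxMarginal

section AuxMG

open Function

variable {d : ℕ}

instance : SigmaFinite (lebd d) := by unfold lebd; infer_instance

/-- The marginal as an `lmarginal`. -/
def MG (q : (Fin d → ℝ) → ℝ≥0∞) (S : Finset (Fin d)) : (Fin d → ℝ) → ℝ≥0∞ :=
  ∫⋯∫⁻_Sᶜ, q ∂(fun _ => (volume : Measure ℝ))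

lemma CLR.marg_eq_MG (q : (Fin d → ℝ) → ℝ≥0∞) (S : Finset (Fin d)) :
    marg q S = MG q S := by
  funext x
  have hx : ∀ j, j ∈ Sᶜ ↔ j ∉ S := fun j => Finset.mem_compl
  let ε : {j : Fin d // j ∈ Sᶜ} ≃ {j : Fin d // j ∉ S} := Equiv.subtypeEquivRight hx
  have hmp := MeasureTheory.measurePreserving_piCongrLeft
    (fun _ : {j : Fin d // j ∉ S} => (volume : Measure ℝ)) ε
  rw [marg, hmp.lintegral_map_equiv]
  simp only [MG, lmarginal]
  apply lintegral_congr
  intro y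
  congr 1
  funext j
  by_cases hj : j ∈ S
  · simp [updateFinset, hj, Finset.mem_compl]
  · have hj' : j ∈ Sᶜ := Finset.mem_compl.mpr hj
    simp only [hj, dif_neg, not_false_iff, updateFinset, hj', dif_pos]
    have : (⟨j, hj⟩ : {j : Fin d // j ∉ S}) = ε ⟨j, hj'⟩ := rfl
    rw [this, MeasurableEquiv.piCongrLeft_apply_apply]

lemma CLR.MG_measurable {q : (Fin d → ℝ) → ℝ≥0∞} (hq : Measurable q)
    (S : Finset (Fin d)) : Measurable (MG q S) :=
  hq.lmarginal _

lemma CLR.MG_update {q : (Fin d → ℝ) → ℝ≥0∞} {s S : Finset (Fin d)}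
    (h : Disjoint s S) (x : Fin d → ℝ) (y : (i : s) → ℝ) :
    MG q S (updateFinset x s y) = MG q S x := by
  show (∫⋯∫⁻_Sᶜ, q ∂(fun _ => (volume : Measure ℝ))) (updateFinset x s y)
      = (∫⋯∫⁻_Sᶜ, q ∂(fun _ => (volume : Measure ℝ))) x
  refine lmarginal_congr (μ := fun _ : Fin d => (volume : Measure ℝ)) (s := Sᶜ)
    (x := updateFinset x s y) (y := x) q fun i hi => ?_
  have hiS : i ∈ S := by simpa using hi
  have : i ∉ s := fun hmem => (Finset.disjoint_left.mp h) hmem hiS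
  simp [updateFinset, this]

lemma CLR.MG_pos {q : (Fin d → ℝ) → ℝ≥0∞} (hq : Measurable q)
    (hqpos : ∀ x, 0 < q x) (S : Finset (Fin d)) (x : Fin d → ℝ) :
    0 < MG q S x := by
  rw [MG, lmarginal]
  have hm : Measurable fun y : (i : (Sᶜ : Finset (Fin d))) → ℝ =>
      q (updateFinset x Sᶜ y) := hq.comp measurable_updateFinset
  rw [lintegral_pos_iff_support hm]
  have hs : Function.support (fun y : (i : (Sᶜ : Finset (Fin d))) → ℝ =>
      q (updateFinset x Sᶜ y)) = Set.univ :=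
    Set.eq_univ_of_forall fun y => (hqpos _).ne'
  rw [hs, Measure.pi_univ]
  exact CanonicallyOrderedAdd.prod_pos.mpr fun _ _ => by simp

lemma CLR.MG_tower {q : (Fin d → ℝ) → ℝ≥0∞} (hq : Measurable q)
    {T1 T2 : Finset (Fin d)} (h : Disjoint T1 T2) :
    (∫⋯∫⁻_T1, MG q (T1 ∪ T2) ∂(fun _ => (volume : Measure ℝ))) = MG q T2 := by
  have hdisj : Disjoint T1 (T1 ∪ T2)ᶜ :=
    Finset.disjoint_left.mpr fun a ha hc =>
      (Finset.mem_compl.mp hc) (Finset.mem_union_left _ ha)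
  have hd := Finset.disjoint_left.mp h
  have hU : T1 ∪ (T1 ∪ T2)ᶜ = T2ᶜ := by
    ext j
    by_cases h1 : j ∈ T1 <;> by_cases h2 : j ∈ T2
    · exact absurd h2 (hd h1)
    · simp [Finset.mem_union, Finset.mem_compl, h1, h2]
    · simp [Finset.mem_union, Finset.mem_compl, h1, h2]
    · simp [Finset.mem_union, Finset.mem_compl, h1, h2]
  rw [MG, ← lmarginal_union _ q hq hdisj, hU, MG]

lemma CLR.MG_total {q : (Fin d → ℝ) → ℝ≥0∞} (hq : Measurable q)
    (S : Finset (Fin d)) :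
    (∫⋯∫⁻_S, MG q S ∂(fun _ => (volume : Measure ℝ)))
      = fun _ => ∫⁻ x, q x ∂(lebd d) := by
  rw [MG, ← lmarginal_union _ q hq disjoint_compl_right, Finset.union_compl,
    lmarginal_univ, lebd]

/-- B1: the marginal-ratio bound. -/
lemma CLR.B1 {q₀ qθ : (Fin d → ℝ) → ℝ≥0∞} (hq₀ : Measurable q₀)
    (hqθ : Measurable qθ) (S : Finset (Fin d)) :
    ∫⁻ x, q₀ x * (MG qθ S x / MG q₀ S x) ∂(lebd d) ≤ ∫⁻ x, qθ x ∂(lebd d) := by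
  have hR : Measurable fun x => MG qθ S x / MG q₀ S x :=
    (CLR.MG_measurable hqθ S).div (CLR.MG_measurable hq₀ S)
  have hF : Measurable fun x => (MG qθ S x / MG q₀ S x) * q₀ x := hR.mul hq₀
  have hcomm : (fun x => q₀ x * (MG qθ S x / MG q₀ S x))
      = fun x => (MG qθ S x / MG q₀ S x) * q₀ x := by
    funext x; rw [mul_comm]
  rw [lebd, hcomm, lintegral_eq_lmarginal_univ (fun _ => (0:ℝ)),
    lintegral_eq_lmarginal_univ (fun _ => (0:ℝ)),
    ← Finset.union_compl S, lmarginal_union _ _ hF disjoint_compl_right,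
    lmarginal_union _ qθ hqθ disjoint_compl_right]
  have hpull : (∫⋯∫⁻_Sᶜ, (fun x => (fun x => MG qθ S x / MG q₀ S x) x * q₀ x)
        ∂(fun _ => (volume : Measure ℝ)))
      = fun x => (MG qθ S x / MG q₀ S x) * MG q₀ S x := by
    rw [CLR.lmarginal_pull _ Sᶜ _ q₀ hq₀ (fun x y => by
      rw [CLR.MG_update disjoint_compl_left x y, CLR.MG_update disjoint_compl_left x y])]
    rfl
  refine le_trans (le_of_eq ?_) (lmarginal_mono (f := fun x =>
      (MG qθ S x / MG q₀ S x) * MG q₀ S x) (fun x => CLR.div_mul_le _ _) _)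
  rw [hpull]

/-- B2: the conditional-ratio bound. -/
lemma CLR.B2 {q₀ qθ : (Fin d → ℝ) → ℝ≥0∞} (hq₀ : Measurable q₀)
    (hqθ : Measurable qθ) (hq₀pos : ∀ x, 0 < q₀ x) (hqθpos : ∀ x, 0 < qθ x)
    {T1 T2 : Finset (Fin d)} (h : Disjoint T1 T2) :
    ∫⁻ x, q₀ x * ((MG qθ (T1 ∪ T2) x * MG q₀ T2 x) /
        (MG qθ T2 x * MG q₀ (T1 ∪ T2) x)) ∂(lebd d)
      ≤ ∫⁻ x, q₀ x ∂(lebd d) := by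
  set U := T1 ∪ T2 with hUdef
  set Φ : (Fin d → ℝ) → ℝ≥0∞ := fun x =>
    (MG qθ U x * MG q₀ T2 x) / (MG qθ T2 x * MG q₀ U x) with hΦdef
  have hT2U : T2 ⊆ U := Finset.subset_union_right
  have hΦmeas : Measurable Φ :=
    ((CLR.MG_measurable hqθ U).mul (CLR.MG_measurable hq₀ T2)).div
      ((CLR.MG_measurable hqθ T2).mul (CLR.MG_measurable hq₀ U))
  have hF : Measurable fun x => Φ x * q₀ x := hΦmeas.mul hq₀
  have hcomm : (fun x => q₀ x * Φ x) = fun x => Φ x * q₀ x := by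
    funext x; rw [mul_comm]
  have hd23 : Disjoint T2 (T1 ∪ Uᶜ) := by
    refine Finset.disjoint_union_right.mpr ⟨h.symm, ?_⟩
    exact Finset.disjoint_left.mpr fun a ha hc => (Finset.mem_compl.mp hc) (hT2U ha)
  have hd1c : Disjoint T1 Uᶜ :=
    Finset.disjoint_left.mpr fun a ha hc =>
      (Finset.mem_compl.mp hc) (Finset.mem_union_left _ ha)
  have huniv : T2 ∪ (T1 ∪ Uᶜ) = (univ : Finset (Fin d)) := by
    rw [← Finset.union_assoc, Finset.union_comm T2 T1, ← hUdef, Finset.union_compl]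
  have step1 : (∫⋯∫⁻_Uᶜ, (fun x => Φ x * q₀ x) ∂(fun _ => (volume : Measure ℝ)))
      ≤ fun x => (MG q₀ T2 x / MG qθ T2 x) * MG qθ U x := by
    rw [CLR.lmarginal_pull _ Uᶜ Φ q₀ hq₀ (fun x y => by
      rw [hΦdef]
      simp only
      rw [CLR.MG_update disjoint_compl_left x y,
        CLR.MG_update disjoint_compl_left x y,
        CLR.MG_update (Finset.disjoint_left.mpr fun a ha hc =>
          (Finset.mem_compl.mp ha) (hT2U hc)) x y,
        CLR.MG_update (Finset.disjoint_left.mpr fun a ha hc =>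
          (Finset.mem_compl.mp ha) (hT2U hc)) x y])]
    intro x
    show Φ x * MG q₀ U x ≤ (MG q₀ T2 x / MG qθ T2 x) * MG qθ U x
    have hle : Φ x * MG q₀ U x ≤ (MG qθ U x * MG q₀ T2 x) / MG qθ T2 x :=
      CLR.div_mul_mul_le _ _ _ (CLR.MG_pos hqθ hqθpos T2 x).ne'
        (CLR.MG_pos hq₀ hq₀pos U x).ne'
    have heq : (MG qθ U x * MG q₀ T2 x) / MG qθ T2 x
        = (MG q₀ T2 x / MG qθ T2 x) * MG qθ U x := by
      rw [div_eq_mul_inv, div_eq_mul_inv]; ring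
    exact le_trans hle (le_of_eq heq)
  have step2 : (∫⋯∫⁻_T1, (fun x => (MG q₀ T2 x / MG qθ T2 x) * MG qθ U x)
        ∂(fun _ => (volume : Measure ℝ))) ≤ MG q₀ T2 := by
    rw [CLR.lmarginal_pull _ T1 (fun x => MG q₀ T2 x / MG qθ T2 x) (MG qθ U)
      (CLR.MG_measurable hqθ U) (fun x y => by
        rw [CLR.MG_update h x y, CLR.MG_update h x y])]
    rw [CLR.MG_tower hqθ h]
    intro x
    exact CLR.div_mul_le _ _
  rw [lebd, hcomm, lintegral_eq_lmarginal_univ (fun _ => (0:ℝ)), ← huniv,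
    lmarginal_union _ _ hF hd23, lmarginal_union _ _ hF hd1c]
  calc (∫⋯∫⁻_T2, ∫⋯∫⁻_T1, ∫⋯∫⁻_Uᶜ, (fun x => Φ x * q₀ x)
          ∂(fun _ => (volume : Measure ℝ)) ∂(fun _ => (volume : Measure ℝ))
          ∂(fun _ => (volume : Measure ℝ))) (fun _ => (0:ℝ))
      ≤ (∫⋯∫⁻_T2, ∫⋯∫⁻_T1, (fun x => (MG q₀ T2 x / MG qθ T2 x) * MG qθ U x)
          ∂(fun _ => (volume : Measure ℝ)) ∂(fun _ => (volume : Measure ℝ)))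
          (fun _ => (0:ℝ)) :=
        (lmarginal_mono (lmarginal_mono step1)) _
    _ ≤ (∫⋯∫⁻_T2, MG q₀ T2 ∂(fun _ => (volume : Measure ℝ))) (fun _ => (0:ℝ)) :=
        (lmarginal_mono step2) _
    _ = ∫⁻ x, q₀ x ∂(Measure.pi fun _ => (volume : Measure ℝ)) :=
        congrFun (CLR.MG_total hq₀ T2) _

/-- The set where a marginal of `q₀` is infinite is null for the density measure. -/
lemma CLR.null_bad {q₀ : (Fin d → ℝ) → ℝ≥0∞} (hq₀ : Measurable q₀)
    (hint : ∫⁻ x, q₀ x ∂(lebd d) ≠ ∞) (S : Finset (Fin d)) :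
    ∫⁻ x in {x | MG q₀ S x = ∞}, q₀ x ∂(lebd d) = 0 := by
  have hMG := CLR.MG_measurable hq₀ S
  have hbad : MeasurableSet {x | MG q₀ S x = ∞} := hMG (measurableSet_singleton ∞)
  set χ : (Fin d → ℝ) → ℝ≥0∞ := ({x | MG q₀ S x = ∞}).indicator (fun _ => 1) with hχdef
  have hχmeas : Measurable χ := measurable_const.indicator hbad
  have hind : (fun x => χ x * q₀ x) = ({x | MG q₀ S x = ∞}).indicator q₀ := by
    funext x
    by_cases hx : x ∈ {x | MG q₀ S x = ∞} <;>
      simp [hχdef, Set.indicator_apply, hx]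
  rw [← lintegral_indicator hbad, ← hind]
  have hmeas : Measurable fun x => χ x * q₀ x := hχmeas.mul hq₀
  rw [lebd, lintegral_eq_lmarginal_univ (fun _ => (0:ℝ)), ← Finset.union_compl S,
    lmarginal_union _ _ hmeas disjoint_compl_right]
  have hdep : ∀ (x : Fin d → ℝ) (y : (i : (Sᶜ : Finset (Fin d))) → ℝ),
      χ (Function.updateFinset x Sᶜ y) = χ x := by
    intro x y
    simp only [hχdef, Set.indicator_apply, Set.mem_setOf_eq,
      CLR.MG_update disjoint_compl_left x y]
  rw [CLR.lmarginal_pull _ Sᶜ χ q₀ hq₀ hdep]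
  have hGmeas : Measurable fun y : (i : (S : Finset (Fin d))) → ℝ =>
      MG q₀ S (Function.updateFinset (fun _ => (0:ℝ)) S y) :=
    hMG.comp measurable_updateFinset
  have hGint : ∫⁻ y, MG q₀ S (Function.updateFinset (fun _ => (0:ℝ)) S y)
      ∂(Measure.pi fun _ : (S : Finset (Fin d)) => (volume : Measure ℝ))
      = ∫⁻ x, q₀ x ∂(lebd d) := by
    have := congrFun (CLR.MG_total hq₀ S) (fun _ => (0:ℝ))
    simpa [lmarginal] using this
  have hae : ∀ᵐ y ∂(Measure.pi fun _ : (S : Finset (Fin d)) => (volume : Measure ℝ)),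
      MG q₀ S (Function.updateFinset (fun _ => (0:ℝ)) S y) < ∞ :=
    ae_lt_top hGmeas (by rw [hGint]; exact hint)
  show ∫⁻ y, χ (Function.updateFinset (fun _ => (0:ℝ)) S y) *
      MG q₀ S (Function.updateFinset (fun _ => (0:ℝ)) S y)
      ∂(Measure.pi fun _ : (S : Finset (Fin d)) => (volume : Measure ℝ)) = 0
  have hzero : ∀ᵐ y ∂(Measure.pi fun _ : (S : Finset (Fin d)) => (volume : Measure ℝ)),
      χ (Function.updateFinset (fun _ => (0:ℝ)) S y) *
        MG q₀ S (Function.updateFinset (fun _ => (0:ℝ)) S y) = 0 := by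
    filter_upwards [hae] with y hy
    simp [hχdef, Set.indicator_apply, hy.ne]
  rw [lintegral_congr_ae hzero, lintegral_zero]

lemma CLR.lebd_null_bad {q₀ : (Fin d → ℝ) → ℝ≥0∞} (hq₀ : Measurable q₀)
    (hq₀pos : ∀ x, 0 < q₀ x) (hint : ∫⁻ x, q₀ x ∂(lebd d) ≠ ∞) (S : Finset (Fin d)) :
    lebd d {x | MG q₀ S x = ∞} = 0 := by
  by_contra hne
  have hpos : 0 < ∫⁻ x in {x | MG q₀ S x = ∞}, q₀ x ∂(lebd d) := by
    rw [setLIntegral_pos_iff hq₀]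
    have hsupp : Function.support q₀ = Set.univ :=
      Set.eq_univ_of_forall fun x => (hq₀pos x).ne'
    rw [hsupp, Set.univ_inter]
    exact pos_iff_ne_zero.mpr hne
  rw [CLR.null_bad hq₀ hint S] at hpos
  exact lt_irrefl 0 hpos

section AuxICL

open Function

variable {d : ℕ}

/-- Index set combining marginal and conditional components. -/
def CLR.idx (d : ℕ) : Finset (Finset (Fin d) ⊕ (Finset (Fin d) × Finset (Fin d))) :=
  (univ.filter (fun S : Finset (Fin d) => S.Nonempty)).disjSum
    ((univ ×ˢ univ).filter
      (fun T : Finset (Fin d) × Finset (Fin d) =>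
        T.1.Nonempty ∧ T.2.Nonempty ∧ Disjoint T.1 T.2))

def CLR.wt (σ : Finset (Fin d) → ℝ) (τ : Finset (Fin d) → Finset (Fin d) → ℝ) (υ : ℝ) :
    (Finset (Fin d) ⊕ (Finset (Fin d) × Finset (Fin d))) → ℝ :=
  Sum.elim (fun S => σ S / υ) (fun T => τ T.1 T.2 / υ)

def CLR.fnum (q : (Fin d → ℝ) → ℝ≥0∞) :
    (Finset (Fin d) ⊕ (Finset (Fin d) × Finset (Fin d))) → (Fin d → ℝ) → ℝ≥0∞ :=
  Sum.elim (fun S => MG q S) (fun T x => MG q (T.1 ∪ T.2) x / MG q T.2 x)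

def CLR.fdiv (qθ q₀ : (Fin d → ℝ) → ℝ≥0∞) :
    (Finset (Fin d) ⊕ (Finset (Fin d) × Finset (Fin d))) → (Fin d → ℝ) → ℝ≥0∞ :=
  Sum.elim (fun S x => MG qθ S x / MG q₀ S x)
    (fun T x => (MG qθ (T.1 ∪ T.2) x * MG q₀ T.2 x) /
      (MG qθ T.2 x * MG q₀ (T.1 ∪ T.2) x))

lemma CLR.icl_eq (q : (Fin d → ℝ) → ℝ≥0∞) (σ : Finset (Fin d) → ℝ)
    (τ : Finset (Fin d) → Finset (Fin d) → ℝ) (υ : ℝ) :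
    icl q σ τ υ = fun x => ∏ j ∈ CLR.idx d, (CLR.fnum q j x) ^ (CLR.wt σ τ υ j) := by
  funext x
  rw [CLR.idx, Finset.prod_disjSum, icl]
  simp only [CLR.fnum, CLR.wt, Sum.elim_inl, Sum.elim_inr, CLR.marg_eq_MG]

lemma CLR.rpow_ne_zero {b : ℝ≥0∞} {w : ℝ} (hb : b ≠ 0) (hw : 0 ≤ w) : b ^ w ≠ 0 := by
  intro h
  rcases ENNReal.rpow_eq_zero_iff.mp h with ⟨h0, _⟩ | ⟨_, hneg⟩
  · exact hb h0
  · linarith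

lemma CLR.wt_nonneg {σ : Finset (Fin d) → ℝ} {τ : Finset (Fin d) → Finset (Fin d) → ℝ}
    {υ : ℝ} (hσ : ∀ S, 0 ≤ σ S) (hτ : ∀ A B, 0 ≤ τ A B) (hυpos : 0 < υ) (j) :
    0 ≤ CLR.wt σ τ υ j := by
  rcases j with S | T
  · exact div_nonneg (hσ S) hυpos.le
  · exact div_nonneg (hτ T.1 T.2) hυpos.le

lemma CLR.fnum_ne_zero {q₀ : (Fin d → ℝ) → ℝ≥0∞} (hq₀ : Measurable q₀)
    (hq₀pos : ∀ x, 0 < q₀ x) {x : Fin d → ℝ}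
    (hx : ∀ S : Finset (Fin d), MG q₀ S x ≠ ∞) (j) :
    CLR.fnum q₀ j x ≠ 0 := by
  rcases j with S | T
  · exact (CLR.MG_pos hq₀ hq₀pos S x).ne'
  · show MG q₀ (T.1 ∪ T.2) x / MG q₀ T.2 x ≠ 0
    rw [div_eq_mul_inv]
    exact mul_ne_zero (CLR.MG_pos hq₀ hq₀pos _ x).ne'
      (ENNReal.inv_ne_zero.mpr (hx T.2))

lemma CLR.fnum_ne_top {q₀ : (Fin d → ℝ) → ℝ≥0∞} (hq₀ : Measurable q₀)
    (hq₀pos : ∀ x, 0 < q₀ x) {x : Fin d → ℝ}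
    (hx : ∀ S : Finset (Fin d), MG q₀ S x ≠ ∞) (j) :
    CLR.fnum q₀ j x ≠ ∞ := by
  rcases j with S | T
  · exact hx S
  · show MG q₀ (T.1 ∪ T.2) x / MG q₀ T.2 x ≠ ∞
    exact (ENNReal.div_lt_top (hx _) (CLR.MG_pos hq₀ hq₀pos T.2 x).ne').ne

lemma CLR.icl_ne_zero {q₀ : (Fin d → ℝ) → ℝ≥0∞} (hq₀ : Measurable q₀)
    (hq₀pos : ∀ x, 0 < q₀ x) {σ : Finset (Fin d) → ℝ}
    {τ : Finset (Fin d) → Finset (Fin d) → ℝ} {υ : ℝ}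
    (hσ : ∀ S, 0 ≤ σ S) (hτ : ∀ A B, 0 ≤ τ A B) (hυpos : 0 < υ) {x : Fin d → ℝ}
    (hx : ∀ S : Finset (Fin d), MG q₀ S x ≠ ∞) :
    icl q₀ σ τ υ x ≠ 0 := by
  rw [CLR.icl_eq]
  exact Finset.prod_ne_zero_iff.mpr fun j _ =>
    CLR.rpow_ne_zero (CLR.fnum_ne_zero hq₀ hq₀pos hx j)
      (CLR.wt_nonneg hσ hτ hυpos j)

lemma CLR.icl_ne_top {q₀ : (Fin d → ℝ) → ℝ≥0∞} (hq₀ : Measurable q₀)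
    (hq₀pos : ∀ x, 0 < q₀ x) {σ : Finset (Fin d) → ℝ}
    {τ : Finset (Fin d) → Finset (Fin d) → ℝ} {υ : ℝ}
    (hσ : ∀ S, 0 ≤ σ S) (hτ : ∀ A B, 0 ≤ τ A B) (hυpos : 0 < υ) {x : Fin d → ℝ}
    (hx : ∀ S : Finset (Fin d), MG q₀ S x ≠ ∞) :
    icl q₀ σ τ υ x ≠ ∞ := by
  rw [CLR.icl_eq]
  exact (ENNReal.prod_lt_top fun j _ =>
    ENNReal.rpow_lt_top_of_nonneg (CLR.wt_nonneg hσ hτ hυpos j)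
      (CLR.fnum_ne_top hq₀ hq₀pos hx j)).ne

lemma CLR.icl_ratio_eq {q₀ qθ : (Fin d → ℝ) → ℝ≥0∞} (hq₀ : Measurable q₀)
    (hqθ : Measurable qθ) (hq₀pos : ∀ x, 0 < q₀ x) (hqθpos : ∀ x, 0 < qθ x)
    {σ : Finset (Fin d) → ℝ} {τ : Finset (Fin d) → Finset (Fin d) → ℝ} {υ : ℝ}
    (hσ : ∀ S, 0 ≤ σ S) (hτ : ∀ A B, 0 ≤ τ A B) (hυpos : 0 < υ) {x : Fin d → ℝ}
    (hx : ∀ S : Finset (Fin d), MG q₀ S x ≠ ∞) :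
    icl qθ σ τ υ x / icl q₀ σ τ υ x
      = ∏ j ∈ CLR.idx d, (CLR.fdiv qθ q₀ j x) ^ (CLR.wt σ τ υ j) := by
  rw [CLR.icl_eq qθ, CLR.icl_eq q₀]
  simp only
  rw [CLR.prod_rpow_div _ _ _ _ (fun j _ => CLR.wt_nonneg hσ hτ hυpos j)
    (fun j _ => CLR.fnum_ne_zero hq₀ hq₀pos hx j)]
  refine Finset.prod_congr rfl fun j _ => ?_
  congr 1
  rcases j with S | T
  · rfl
  · show (MG qθ (T.1 ∪ T.2) x / MG qθ T.2 x) / (MG q₀ (T.1 ∪ T.2) x / MG q₀ T.2 x)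
      = (MG qθ (T.1 ∪ T.2) x * MG q₀ T.2 x) / (MG qθ T.2 x * MG q₀ (T.1 ∪ T.2) x)
    exact CLR.div4 _ _ _ _ (CLR.MG_pos hqθ hqθpos T.2 x).ne'
      (CLR.MG_pos hq₀ hq₀pos _ x).ne' (hx _) (hx T.2)

lemma CLR.icl_measurable {q : (Fin d → ℝ) → ℝ≥0∞} (hq : Measurable q)
    (σ : Finset (Fin d) → ℝ) (τ : Finset (Fin d) → Finset (Fin d) → ℝ) (υ : ℝ) :
    Measurable (icl q σ τ υ) := by
  rw [CLR.icl_eq]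
  refine Finset.measurable_prod _ fun j _ => ?_
  rcases j with S | T
  · exact (CLR.MG_measurable hq S).pow_const _
  · exact (((CLR.MG_measurable hq _).div (CLR.MG_measurable hq _))).pow_const _

lemma CLR.fdiv_measurable {q₀ qθ : (Fin d → ℝ) → ℝ≥0∞} (hq₀ : Measurable q₀)
    (hqθ : Measurable qθ) (j) : Measurable (CLR.fdiv qθ q₀ j) := by
  rcases j with S | T
  · exact (CLR.MG_measurable hqθ S).div (CLR.MG_measurable hq₀ S)
  · exact ((CLR.MG_measurable hqθ _).mul (CLR.MG_measurable hq₀ _)).div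
      ((CLR.MG_measurable hqθ _).mul (CLR.MG_measurable hq₀ _))

/-- The key per-observation bound. -/
lemma CLR.K {q₀ qθ : (Fin d → ℝ) → ℝ≥0∞} (hq₀ : Measurable q₀)
    (hqθ : Measurable qθ) (hq₀pos : ∀ x, 0 < q₀ x) (hqθpos : ∀ x, 0 < qθ x)
    (h₀int : ∫⁻ x, q₀ x ∂(lebd d) = 1) (hθint : ∫⁻ x, qθ x ∂(lebd d) = 1)
    {σ : Finset (Fin d) → ℝ} {τ : Finset (Fin d) → Finset (Fin d) → ℝ} {υ : ℝ}
    (hσ : ∀ S, 0 ≤ σ S) (hτ : ∀ A B, 0 ≤ τ A B) (hυpos : 0 < υ)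
    (hυ : υ = (∑ S ∈ univ.filter (fun S : Finset (Fin d) => S.Nonempty), σ S) +
        ∑ T ∈ (univ ×ˢ univ).filter
          (fun T : Finset (Fin d) × Finset (Fin d) =>
            T.1.Nonempty ∧ T.2.Nonempty ∧ Disjoint T.1 T.2), τ T.1 T.2) :
    ∫⁻ x, q₀ x * (icl qθ σ τ υ x / icl q₀ σ τ υ x) ∂(lebd d) ≤ 1 := by
  set ν := (lebd d).withDensity q₀ with hνdef
  have hR : Measurable fun x => icl qθ σ τ υ x / icl q₀ σ τ υ x :=
    (CLR.icl_measurable hqθ σ τ υ).div (CLR.icl_measurable hq₀ σ τ υ)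
  have hwd := lintegral_withDensity_eq_lintegral_mul (lebd d) hq₀ hR
  simp only [Pi.mul_apply] at hwd
  rw [← hwd]
  -- a.e. good set
  have hbad : ν {x | ¬ ∀ S : Finset (Fin d), MG q₀ S x ≠ ∞} = 0 := by
    have hsub : {x | ¬ ∀ S : Finset (Fin d), MG q₀ S x ≠ ∞}
        ⊆ ⋃ S : Finset (Fin d), {x | MG q₀ S x = ∞} := by
      intro x hx
      simp only [Set.mem_setOf_eq, not_forall, not_not] at hx
      obtain ⟨S, hS⟩ := hx
      exact Set.mem_iUnion.mpr ⟨S, hS⟩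
    refine measure_mono_null hsub (measure_iUnion_null fun S => ?_)
    have hbadS : MeasurableSet {x | MG q₀ S x = ∞} :=
      (CLR.MG_measurable hq₀ S) (measurableSet_singleton ∞)
    rw [hνdef, withDensity_apply _ hbadS]
    exact CLR.null_bad hq₀ (by rw [h₀int]; exact one_ne_top) S
  have hae : ∀ᵐ x ∂ν, ∀ S : Finset (Fin d), MG q₀ S x ≠ ∞ := by
    rw [ae_iff]; exact hbad
  have hcongr : ∫⁻ x, icl qθ σ τ υ x / icl q₀ σ τ υ x ∂ν
      = ∫⁻ x, ∏ j ∈ CLR.idx d, (CLR.fdiv qθ q₀ j x) ^ (CLR.wt σ τ υ j) ∂ν := by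
    refine lintegral_congr_ae ?_
    filter_upwards [hae] with x hx
    exact CLR.icl_ratio_eq hq₀ hqθ hq₀pos hqθpos hσ hτ hυpos hx
  rw [hcongr]
  have hsum : ∑ j ∈ CLR.idx d, CLR.wt σ τ υ j = 1 := by
    rw [CLR.idx, Finset.sum_disjSum]
    simp only [CLR.wt, Sum.elim_inl, Sum.elim_inr]
    rw [← Finset.sum_div, ← Finset.sum_div, ← add_div, ← hυ,
      div_self (ne_of_gt hυpos)]
  refine le_trans (ENNReal.lintegral_prod_norm_pow_le _
    (fun j _ => (CLR.fdiv_measurable hq₀ hqθ j).aemeasurable) hsum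
    (fun j _ => CLR.wt_nonneg hσ hτ hυpos j)) ?_
  refine Finset.prod_le_one (fun j _ => zero_le) fun j hj => ?_
  refine ENNReal.rpow_le_one ?_ (CLR.wt_nonneg hσ hτ hυpos j)
  have hwd' := lintegral_withDensity_eq_lintegral_mul (lebd d) hq₀
    (CLR.fdiv_measurable hq₀ hqθ j)
  simp only [Pi.mul_apply] at hwd'
  rw [hνdef, hwd']
  rcases j with S | T
  · exact le_trans (CLR.B1 hq₀ hqθ S) (le_of_eq hθint)
  · have hmem : T ∈ (univ ×ˢ univ).filter
        (fun T : Finset (Fin d) × Finset (Fin d) =>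
          T.1.Nonempty ∧ T.2.Nonempty ∧ Disjoint T.1 T.2) := by
      rw [CLR.idx] at hj
      exact (Finset.inr_mem_disjSum).mp hj
    obtain ⟨-, -, hdisj⟩ := (Finset.mem_filter.mp hmem).2
    exact le_trans (CLR.B2 hq₀ hqθ hq₀pos hqθpos hdisj) (le_of_eq h₀int)

end AuxICL

section AuxOuter

lemma CLR.lintegral_prod_le {α β : Type*} [MeasurableSpace α] [MeasurableSpace β]
    (μ : Measure α) (ν : Measure β) [SFinite μ] [SFinite ν] (f : α × β → ℝ≥0∞) :
    ∫⁻ z, f z ∂(μ.prod ν) ≤ ∫⁻ y, ∫⁻ x, f (x, y) ∂μ ∂ν := by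
  conv_lhs => rw [lintegral_def]
  refine iSup_le fun g => iSup_le fun hg => ?_
  have h1 : g.lintegral (μ.prod ν) = ∫⁻ z, g z ∂(μ.prod ν) :=
    (SimpleFunc.lintegral_eq_lintegral g _).symm
  rw [h1, lintegral_prod_symm _ g.measurable.aemeasurable]
  exact lintegral_mono fun y => lintegral_mono fun x => hg (x, y)

variable {d : ℕ}

lemma CLR.clik_measurable {n : ℕ} {q : (Fin d → ℝ) → ℝ≥0∞} (hq : Measurable q)
    (σ : Finset (Fin d) → ℝ) (τ : Finset (Fin d) → Finset (Fin d) → ℝ) (υ : ℝ) :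
    Measurable (clik (n := n) q σ τ υ) :=
  Finset.measurable_prod _ fun i _ =>
    (CLR.icl_measurable hq σ τ υ).comp (measurable_pi_apply i)

lemma CLR.clik_ratio_eq {n : ℕ} {q₀ : (Fin d → ℝ) → ℝ≥0∞} (hq₀ : Measurable q₀)
    (hq₀pos : ∀ x, 0 < q₀ x) {σ : Finset (Fin d) → ℝ}
    {τ : Finset (Fin d) → Finset (Fin d) → ℝ} {υ : ℝ}
    (hσ : ∀ S, 0 ≤ σ S) (hτ : ∀ A B, 0 ≤ τ A B) (hυpos : 0 < υ)
    (qθ : (Fin d → ℝ) → ℝ≥0∞) {z1 : Fin n → Fin d → ℝ}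
    (hz : ∀ i, ∀ S : Finset (Fin d), MG q₀ S (z1 i) ≠ ∞) :
    (∏ i, q₀ (z1 i)) * (clik qθ σ τ υ z1 / clik q₀ σ τ υ z1)
      = ∏ i, (q₀ (z1 i) * (icl qθ σ τ υ (z1 i) / icl q₀ σ τ υ (z1 i))) := by
  rw [clik, clik, CLR.prod_div univ _ _
    (fun i _ => CLR.icl_ne_zero hq₀ hq₀pos hσ hτ hυpos (hz i)),
    ← Finset.prod_mul_distrib]

end AuxOuter


/-- The split sample composite likelihood ratio statistic
`U¹(θ₀;X_n) = L(θ̂²;X_n¹)/L(θ₀;X_n¹)`, where the estimator `θ̂²` depends only on the second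
subsample, has expectation at most 1 under the true parameter `θ₀`. -/
theorem split_sample_CLR_expectation_le_one
    {d : ℕ} (n₁ n₂ : ℕ) {Θ : Type*}
    (p : Θ → (Fin d → ℝ) → ℝ≥0∞) (θ₀ : Θ)
    (hmeas : ∀ θ, Measurable (p θ))
    (hdens : ∀ θ, ∫⁻ x, p θ x ∂(lebd d) = 1)
    (hpos : ∀ θ x, 0 < p θ x)
    (σ : Finset (Fin d) → ℝ) (τ : Finset (Fin d) → Finset (Fin d) → ℝ)
    (hσ : ∀ S, 0 ≤ σ S) (hτ : ∀ A B, 0 ≤ τ A B) (υ : ℝ)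
    (hυ : υ = (∑ S ∈ univ.filter (fun S : Finset (Fin d) => S.Nonempty), σ S) +
        ∑ T ∈ (univ ×ˢ univ).filter
          (fun T : Finset (Fin d) × Finset (Fin d) =>
            T.1.Nonempty ∧ T.2.Nonempty ∧ Disjoint T.1 T.2), τ T.1 T.2)
    (hυpos : 0 < υ)
    (θhat₂ : (Fin n₂ → Fin d → ℝ) → Θ) :
    ∫⁻ z, clik (p (θhat₂ z.2)) σ τ υ z.1 / clik (p θ₀) σ τ υ z.1
        ∂(sampleLaw n₁ n₂ (p θ₀)) ≤ 1 := by
  classical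
  have hq₀ : Measurable (p θ₀) := hmeas θ₀
  have hq₀pos : ∀ x, 0 < p θ₀ x := hpos θ₀
  have hq₀int : ∫⁻ x, p θ₀ x ∂(lebd d) ≠ ∞ := by rw [hdens θ₀]; exact one_ne_top
  have hdensmeas : Measurable fun z : (Fin n₁ → Fin d → ℝ) × (Fin n₂ → Fin d → ℝ) =>
      (∏ i, p θ₀ (z.1 i)) * ∏ i, p θ₀ (z.2 i) := by
    refine Measurable.mul ?_ ?_
    · exact Finset.measurable_prod _ fun i _ =>
        hq₀.comp ((measurable_pi_apply i).comp measurable_fst)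
    · exact Finset.measurable_prod _ fun i _ =>
        hq₀.comp ((measurable_pi_apply i).comp measurable_snd)
  have hq₀fin : lebd d {x | ¬ p θ₀ x < ∞} = 0 := by
    have := ae_lt_top hq₀ hq₀int
    rwa [ae_iff] at this
  have hpi_fin : ∀ (n : ℕ), (Measure.pi fun _ : Fin n => lebd d)
      {z : Fin n → Fin d → ℝ | ¬ ∀ i, p θ₀ (z i) < ∞} = 0 := by
    intro n
    have hsub : {z : Fin n → Fin d → ℝ | ¬ ∀ i, p θ₀ (z i) < ∞}
        ⊆ ⋃ i, Function.eval i ⁻¹' {x | ¬ p θ₀ x < ∞} := by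
      intro z hz
      simp only [Set.mem_setOf_eq, not_forall] at hz
      obtain ⟨i, hi⟩ := hz
      exact Set.mem_iUnion.mpr ⟨i, hi⟩
    exact measure_mono_null hsub (measure_iUnion_null fun i =>
      Measure.pi_eval_preimage_null _ hq₀fin)
  have hae_dens : ∀ᵐ z ∂((Measure.pi fun _ : Fin n₁ => lebd d).prod
      (Measure.pi fun _ : Fin n₂ => lebd d)),
      (fun z : (Fin n₁ → Fin d → ℝ) × (Fin n₂ → Fin d → ℝ) =>
        (∏ i, p θ₀ (z.1 i)) * ∏ i, p θ₀ (z.2 i)) z < ∞ := by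
    rw [ae_iff]
    have hsub : {z : (Fin n₁ → Fin d → ℝ) × (Fin n₂ → Fin d → ℝ) |
        ¬ (∏ i, p θ₀ (z.1 i)) * ∏ i, p θ₀ (z.2 i) < ∞} ⊆
        (Prod.fst ⁻¹' {z1 : Fin n₁ → Fin d → ℝ | ¬ ∀ i, p θ₀ (z1 i) < ∞}) ∪
        (Prod.snd ⁻¹' {z2 : Fin n₂ → Fin d → ℝ | ¬ ∀ i, p θ₀ (z2 i) < ∞}) := by
      intro z hz
      by_contra hcon
      simp only [Set.mem_union, Set.mem_preimage, Set.mem_setOf_eq, not_or,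
        not_not] at hcon
      obtain ⟨h1, h2⟩ := hcon
      exact hz (ENNReal.mul_lt_top (ENNReal.prod_lt_top fun i _ => h1 i)
        (ENNReal.prod_lt_top fun i _ => h2 i))
    refine measure_mono_null hsub (measure_union_null ?_ ?_)
    · rw [show Prod.fst ⁻¹' {z1 : Fin n₁ → Fin d → ℝ | ¬ ∀ i, p θ₀ (z1 i) < ∞}
          = {z1 : Fin n₁ → Fin d → ℝ | ¬ ∀ i, p θ₀ (z1 i) < ∞} ×ˢ Set.univ from
        (Set.prod_univ).symm, Measure.prod_prod, hpi_fin n₁, zero_mul]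
    · rw [show Prod.snd ⁻¹' {z2 : Fin n₂ → Fin d → ℝ | ¬ ∀ i, p θ₀ (z2 i) < ∞}
          = Set.univ ×ˢ {z2 : Fin n₂ → Fin d → ℝ | ¬ ∀ i, p θ₀ (z2 i) < ∞} from
        (Set.univ_prod).symm, Measure.prod_prod, hpi_fin n₂, mul_zero]
  have hGnull : lebd d {x | ¬ ∀ S : Finset (Fin d), MG (p θ₀) S x ≠ ∞} = 0 := by
    have hsub : {x | ¬ ∀ S : Finset (Fin d), MG (p θ₀) S x ≠ ∞}
        ⊆ ⋃ S : Finset (Fin d), {x | MG (p θ₀) S x = ∞} := by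
      intro x hx
      simp only [Set.mem_setOf_eq, not_forall, not_not] at hx
      obtain ⟨S, hS⟩ := hx
      exact Set.mem_iUnion.mpr ⟨S, hS⟩
    exact measure_mono_null hsub (measure_iUnion_null fun S =>
      CLR.lebd_null_bad hq₀ hq₀pos hq₀int S)
  rw [sampleLaw,
    lintegral_withDensity_eq_lintegral_mul_non_measurable _ hdensmeas hae_dens]
  refine le_trans (CLR.lintegral_prod_le _ _ _) ?_
  refine le_trans (lintegral_mono (g := fun z2 : Fin n₂ → Fin d → ℝ =>
      ∏ i, p θ₀ (z2 i)) fun z2 => ?_) (le_of_eq ?_)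
  · have hqθ : Measurable (p (θhat₂ z2)) := hmeas _
    have hqθpos : ∀ x, 0 < p (θhat₂ z2) x := hpos _
    show ∫⁻ z1, ((∏ i, p θ₀ (z1 i)) * ∏ i, p θ₀ (z2 i)) *
        (clik (p (θhat₂ z2)) σ τ υ z1 / clik (p θ₀) σ τ υ z1)
        ∂(Measure.pi fun _ : Fin n₁ => lebd d) ≤ ∏ i, p θ₀ (z2 i)
    have hrearr : ∀ z1 : Fin n₁ → Fin d → ℝ,
        ((∏ i, p θ₀ (z1 i)) * ∏ i, p θ₀ (z2 i)) *
          (clik (p (θhat₂ z2)) σ τ υ z1 / clik (p θ₀) σ τ υ z1)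
        = (∏ i, p θ₀ (z2 i)) * ((∏ i, p θ₀ (z1 i)) *
          (clik (p (θhat₂ z2)) σ τ υ z1 / clik (p θ₀) σ τ υ z1)) :=
      fun z1 => by ring
    rw [lintegral_congr hrearr]
    have hinnermeas : Measurable fun z1 : Fin n₁ → Fin d → ℝ =>
        (∏ i, p θ₀ (z1 i)) *
          (clik (p (θhat₂ z2)) σ τ υ z1 / clik (p θ₀) σ τ υ z1) := by
      refine Measurable.mul ?_ ?_
      · exact Finset.measurable_prod _ fun i _ =>
          hq₀.comp (measurable_pi_apply i)
      · exact (CLR.clik_measurable hqθ σ τ υ).div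
          (CLR.clik_measurable hq₀ σ τ υ)
    rw [lintegral_const_mul _ hinnermeas]
    have hbound : ∫⁻ z1, (∏ i, p θ₀ (z1 i)) *
        (clik (p (θhat₂ z2)) σ τ υ z1 / clik (p θ₀) σ τ υ z1)
        ∂(Measure.pi fun _ : Fin n₁ => lebd d) ≤ 1 := by
      have haeG : ∀ᵐ z1 ∂(Measure.pi fun _ : Fin n₁ => lebd d),
          ∀ i, ∀ S : Finset (Fin d), MG (p θ₀) S (z1 i) ≠ ∞ := by
        rw [ae_iff]
        have hsub : {z1 : Fin n₁ → Fin d → ℝ |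
            ¬ ∀ i, ∀ S : Finset (Fin d), MG (p θ₀) S (z1 i) ≠ ∞}
            ⊆ ⋃ i, Function.eval i ⁻¹'
              {x | ¬ ∀ S : Finset (Fin d), MG (p θ₀) S x ≠ ∞} := by
          intro z1 hz1
          simp only [Set.mem_setOf_eq, not_forall] at hz1
          obtain ⟨i, hi⟩ := hz1
          refine Set.mem_iUnion.mpr ⟨i, ?_⟩
          simp only [Set.mem_preimage, Function.eval, Set.mem_setOf_eq]
          simpa using hi
        exact measure_mono_null hsub (measure_iUnion_null fun i =>
          Measure.pi_eval_preimage_null _ hGnull)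
      have hcongr : ∫⁻ z1, (∏ i, p θ₀ (z1 i)) *
          (clik (p (θhat₂ z2)) σ τ υ z1 / clik (p θ₀) σ τ υ z1)
          ∂(Measure.pi fun _ : Fin n₁ => lebd d)
          = ∫⁻ z1, ∏ i, (p θ₀ (z1 i) * (icl (p (θhat₂ z2)) σ τ υ (z1 i) /
              icl (p θ₀) σ τ υ (z1 i)))
          ∂(Measure.pi fun _ : Fin n₁ => lebd d) := by
        refine lintegral_congr_ae ?_
        filter_upwards [haeG] with z1 hz1
        exact CLR.clik_ratio_eq hq₀ hq₀pos hσ hτ hυpos _ hz1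
      rw [hcongr, CLR.lintegral_pi_prod (lebd d)
        (fun _ x => p θ₀ x * (icl (p (θhat₂ z2)) σ τ υ x / icl (p θ₀) σ τ υ x))
        (fun _ => hq₀.mul ((CLR.icl_measurable hqθ σ τ υ).div
          (CLR.icl_measurable hq₀ σ τ υ)))]
      refine Finset.prod_le_one (fun _ _ => zero_le) fun i _ => ?_
      exact CLR.K hq₀ hqθ hq₀pos hqθpos (hdens θ₀) (hdens _) hσ hτ hυpos hυ
    calc (∏ i, p θ₀ (z2 i)) * ∫⁻ z1, (∏ i, p θ₀ (z1 i)) *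
          (clik (p (θhat₂ z2)) σ τ υ z1 / clik (p θ₀) σ τ υ z1)
          ∂(Measure.pi fun _ : Fin n₁ => lebd d)
        ≤ (∏ i, p θ₀ (z2 i)) * 1 := mul_le_mul_right hbound _
      _ = ∏ i, p θ₀ (z2 i) := mul_one _
  · rw [CLR.lintegral_pi_prod (lebd d) (fun _ => p θ₀) (fun _ => hq₀)]
    simp [hdens θ₀]
end AuxMG
end
end

section
/- The normalizing constant of the bivariate exponential conditionals density satisfies κ(θ) = θ e^{−1/θ} / ∫_{1/θ}^∞ w^{−1} e^{−w} dw for θ > 0; equivalently ∫₀^∞∫₀^∞ exp{−x₁−x₂−θx₁x₂} dx₁dx₂ = e^{1/θ} ∫_{1/θ}^∞ w^{−1}e^{−w} dw / θ. -/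
/-!
Integrating out `x₁` gives `∫₀^∞ e^{-x₂} / (1 + θ x₂) dx₂`. Writing `1 + θ x₂ = θ (x₂ + 1/θ)` and
`e^{-x₂} = e^{1/θ} e^{-(x₂ + 1/θ)}`, the shift `w = x₂ + 1/θ` turns this into
`e^{1/θ} E₁(1/θ) / θ`, whose reciprocal is `κ(θ)` because `E₁(1/θ) > 0`.
-/

open Real MeasureTheory Set

noncomputable def expIntegralE₁ (x : ℝ) : ℝ := ∫ w in Ioi x, w⁻¹ * exp (-w)

theorem setIntegral_Ioi_comp_add_right {E : Type*} [NormedAddCommGroup E] [NormedSpace ℝ E]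
    (f : ℝ → E) (a c : ℝ) :
    ∫ x in Ioi a, f (x + c) = ∫ w in Ioi (a + c), f w := by
  simpa using (measurePreserving_add_right (volume : Measure ℝ) c).setIntegral_preimage_emb
    (measurableEmbedding_addRight c) f (Ioi (a + c))

theorem integrableOn_inv_mul_exp_neg_Ioi {c : ℝ} (hc : 0 < c) :
    IntegrableOn (fun w => w⁻¹ * exp (-w)) (Ioi c) := by
  have hexp : IntegrableOn (fun w => exp (-w)) (Ioi c) := by
    simpa using exp_neg_integrableOn_Ioi c one_pos
  refine (hexp.const_mul c⁻¹).mono' (by fun_prop) ?_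
  filter_upwards [ae_restrict_mem measurableSet_Ioi] with w hw
  have hw₀ : 0 < w := hc.trans hw
  rw [Real.norm_of_nonneg (by positivity)]
  gcongr
  exact hw.le

theorem expIntegralE₁_pos {c : ℝ} (hc : 0 < c) : 0 < expIntegralE₁ c := by
  have hpos : ∀ w ∈ Ioi c, 0 < w⁻¹ * exp (-w) := fun w hw => by
    have : 0 < w := hc.trans hw
    positivity
  rw [expIntegralE₁, setIntegral_pos_iff_support_of_nonneg_ae
    ((ae_restrict_mem measurableSet_Ioi).mono fun w hw => (hpos w hw).le)
    (integrableOn_inv_mul_exp_neg_Ioi hc),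
    inter_eq_right.mpr fun w hw => Function.mem_support.mpr (hpos w hw).ne', Real.volume_Ioi]
  exact ENNReal.zero_lt_top

theorem integral_exp_neg_sub_mul_Ioi (θ y : ℝ) (hy : 0 < 1 + θ * y) :
    ∫ x in Ioi (0 : ℝ), exp (-x - y - θ * x * y) = exp (-y) * (1 + θ * y)⁻¹ := by
  have hsplit : ∀ x, exp (-x - y - θ * x * y) = exp (-y) * exp (-(1 + θ * y) * x) := fun x => by
    rw [← exp_add]
    ring_nf
  simp_rw [hsplit]
  rw [integral_const_mul, integral_exp_mul_Ioi (by linarith)]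
  simp only [mul_zero, exp_zero, neg_div_neg_eq, one_div]

theorem integral_integral_exp_neg_sub_mul {θ : ℝ} (hθ : 0 < θ) :
    ∫ y in Ioi (0 : ℝ), ∫ x in Ioi (0 : ℝ), exp (-x - y - θ * x * y)
      = exp (1 / θ) * expIntegralE₁ (1 / θ) / θ := by
  have hinner : EqOn (fun y => ∫ x in Ioi (0 : ℝ), exp (-x - y - θ * x * y))
      (fun y => exp (1 / θ) / θ * ((y + 1 / θ)⁻¹ * exp (-(y + 1 / θ)))) (Ioi 0) := by
    intro y (hy : 0 < y)
    dsimp only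
    rw [integral_exp_neg_sub_mul_Ioi θ y (by positivity)]
    have hfactor : 1 + θ * y = θ * (y + 1 / θ) := by field_simp; ring
    have hshift : exp (-y) = exp (1 / θ) * exp (-(y + 1 / θ)) := by rw [← exp_add]; ring_nf
    rw [hfactor, hshift, mul_inv]
    ring
  rw [setIntegral_congr_fun measurableSet_Ioi hinner, integral_const_mul,
    setIntegral_Ioi_comp_add_right (fun w => w⁻¹ * exp (-w)), zero_add, expIntegralE₁]
  ring

/-- The normalizing constant of the bivariate exponential conditionals density satisfies
`κ(θ) = θ e^{-1/θ} / ∫_{1/θ}^∞ w⁻¹ e^{-w} dw` for `θ > 0`; equivalently,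
`∫₀^∞ ∫₀^∞ exp{-x₁ - x₂ - θ x₁ x₂} dx₁ dx₂ = e^{1/θ} (∫_{1/θ}^∞ w⁻¹ e^{-w} dw) / θ`. -/
theorem exponential_conditionals_normalizing_constant (θ : ℝ) (hθ : 0 < θ) :
    (∫ x₂ in Set.Ioi (0:ℝ), ∫ x₁ in Set.Ioi (0:ℝ), Real.exp (-x₁ - x₂ - θ * x₁ * x₂))
        = Real.exp (1/θ) * (∫ w in Set.Ioi (1/θ), w⁻¹ * Real.exp (-w)) / θ ∧
      ∀ κ : ℝ,
        κ * (∫ x₂ in Set.Ioi (0:ℝ), ∫ x₁ in Set.Ioi (0:ℝ),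
              Real.exp (-x₁ - x₂ - θ * x₁ * x₂)) = 1 →
        κ = θ * Real.exp (-(1/θ)) / ∫ w in Set.Ioi (1/θ), w⁻¹ * Real.exp (-w) := by
  have hZ := integral_integral_exp_neg_sub_mul hθ
  have hE := expIntegralE₁_pos (one_div_pos.mpr hθ)
  unfold expIntegralE₁ at hZ hE
  refine ⟨hZ, fun κ hκ => ?_⟩
  rw [hZ] at hκ
  rw [exp_neg, eq_div_iff hE.ne']
  field_simp at hκ ⊢
  linear_combination hκ
end
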